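/- Let h be a positive semidefinite rank-2 operator on ℂ² ⊗ ℂ² that is not a tensor product of single-qubit operators. Then the range of h contains two linearly independent entangled vectors (i.e., vectors that are not simple tensors). -/

import Mathlib

/-!
The determinant of the coefficient matrix is a quadratic form `detForm` on `K² ⊗ K²` vanishing
exactly on product vectors. If it vanishes on all of the two-dimensional range of `h`, take a
spanning pair `u ⊗ v`, `u' ⊗ v'` there: `detForm (u ⊗ v + u' ⊗ v') = det (u, u') * det (v, v')`,
so `u' ∥ u` or `v' ∥ v`, the range lies in `u ⊗ K²` or in `K² ⊗ v`, and hermiticity then makes `h`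
a Kronecker product. Otherwise `detForm x ≠ 0` for some `x` in the range, and by the parallelogram
law one of `y`, `x + y`, `-x + y` completes `x` to an independent pair of entangled vectors.
-/

open scoped ComplexOrder Kronecker
open Matrix Module Submodule

section LinearAlgebra

variable {K V : Type*} [Field K] [AddCommGroup V] [Module K V]

theorem Submodule.exists_linearIndependent_pair_mem {N : Submodule K V}
    (hN : 1 < finrank K N) {x : V} (hx : x ∈ N) (hx0 : x ≠ 0) :
    ∃ y ∈ N, LinearIndependent K ![x, y] := by
  obtain ⟨y, hxy⟩ := exists_linearIndependent_pair_of_one_lt_finrank hN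
    (x := ⟨x, hx⟩) (by simpa using hx0)
  refine ⟨y, y.2, ?_⟩
  rw [show ![x, (y : V)] = N.subtype ∘ ![⟨x, hx⟩, y] by ext i; fin_cases i <;> rfl]
  exact hxy.map' N.subtype N.ker_subtype

theorem Submodule.exists_linearIndependent_pair_span_eq {N : Submodule K V}
    (hN : finrank K N = 2) : ∃ x y, LinearIndependent K ![x, y] ∧ span K {x, y} = N := by
  obtain ⟨x, hxN, hx0⟩ := N.exists_mem_ne_zero_of_ne_bot (by rintro rfl; simp at hN)
  obtain ⟨y, hyN, hxy⟩ := N.exists_linearIndependent_pair_mem (by omega) hxN hx0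
  have : FiniteDimensional K N := Module.finite_of_finrank_eq_succ hN
  refine ⟨x, y, hxy, eq_of_le_of_finrank_eq
    (span_le.2 (Set.insert_subset_iff.2 ⟨hxN, Set.singleton_subset_iff.2 hyN⟩)) ?_⟩
  rw [hN, ← Matrix.range_cons_cons_empty x y ![], finrank_span_eq_card hxy, Fintype.card_fin]

namespace QuadraticMap

variable [NeZero (2 : K)]

theorem exists_map_smul_add_ne_zero (Q : QuadraticMap K V K) {x : V} (hx : Q x ≠ 0) (y : V) :
    ∃ c : K, Q (c • x + y) ≠ 0 := by
  by_contra! h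
  have parallelogram : Q ((1 : K) • x + y) + Q ((-1 : K) • x + y) = 2 * Q x + 2 * Q y := by
    rw [one_smul, neg_one_smul, QuadraticMap.map_add Q, QuadraticMap.map_add Q, Q.map_neg,
      polar_neg_left]
    ring
  have hy : Q y = 0 := by simpa using h 0
  rw [h 1, h (-1), hy] at parallelogram
  have h2 : (2 : K) * Q x = 0 := by linear_combination -parallelogram
  exact hx ((mul_eq_zero.1 h2).resolve_left two_ne_zero)

theorem exists_linearIndependent_pair_mem_map_ne_zero (Q : QuadraticMap K V K)
    {N : Submodule K V} (hN : 1 < finrank K N) {x : V} (hx : x ∈ N) (hQx : Q x ≠ 0) :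
    ∃ y ∈ N, LinearIndependent K ![x, y] ∧ Q y ≠ 0 := by
  obtain ⟨y, hyN, hxy⟩ := N.exists_linearIndependent_pair_mem hN hx
    (by rintro rfl; exact hQx Q.map_zero)
  obtain ⟨c, hc⟩ := Q.exists_map_smul_add_ne_zero hQx y
  exact ⟨c • x + y, N.add_mem (N.smul_mem c hx) hyN,
    (LinearIndependent.pair_add_smul_right_iff c).2 hxy, hc⟩

end QuadraticMap

end LinearAlgebra

section Tensor

variable {R ι κ : Type*}

def IsProductVector [Mul R] (x : ι × κ → R) : Prop :=
  ∃ (u : ι → R) (v : κ → R), ∀ p : ι × κ, x p = u p.1 * v p.2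

variable [CommSemiring R]

@[simps]
def tensorLeft (u : ι → R) : (κ → R) →ₗ[R] ι × κ → R where
  toFun w p := u p.1 * w p.2
  map_add' _ _ := by ext; simp [mul_add]
  map_smul' _ _ := by ext; simp [mul_left_comm]

@[simps]
def tensorRight (v : κ → R) : (ι → R) →ₗ[R] ι × κ → R where
  toFun w p := w p.1 * v p.2
  map_add' _ _ := by ext; simp [add_mul]
  map_smul' _ _ := by ext; simp [mul_assoc]

end Tensor

section Determinant

variable {R : Type*} [CommRing R]

def detForm : QuadraticMap R (Fin 2 × Fin 2 → R) R :=
  LinearMap.BilinMap.toQuadraticMap <|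
    LinearMap.mk₂ R (fun x y : Fin 2 × Fin 2 → R => x (0, 0) * y (1, 1) - x (0, 1) * y (1, 0))
      (fun _ _ _ => by simp only [Pi.add_apply]; ring)
      (fun _ _ _ => by simp only [Pi.smul_apply, smul_eq_mul]; ring)
      (fun _ _ _ => by simp only [Pi.add_apply]; ring)
      (fun _ _ _ => by simp only [Pi.smul_apply, smul_eq_mul]; ring)

@[simp]
theorem detForm_apply (x : Fin 2 × Fin 2 → R) :
    detForm x = x (0, 0) * x (1, 1) - x (0, 1) * x (1, 0) :=
  rfl

theorem detForm_tensorLeft_add_tensorLeft (u u' v v' : Fin 2 → R) :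
    detForm (tensorLeft u v + tensorLeft u' v') = (of ![u, u']).det * (of ![v, v']).det := by
  simp only [detForm_apply, Pi.add_apply, tensorLeft_apply, det_fin_two, of_apply, cons_val_zero,
    cons_val_one]
  ring

variable {K : Type*} [Field K]

theorem exists_smul_eq_of_det_eq_zero {a b : Fin 2 → K} (ha : a ≠ 0)
    (hdet : (of ![a, b]).det = 0) : ∃ c : K, c • a = b := by
  by_contra! hc
  have hrows : LinearIndependent K (of ![a, b]).row := (LinearIndependent.pair_iff' ha).2 hc
  rw [linearIndependent_rows_iff_isUnit, isUnit_iff_isUnit_det, hdet] at hrows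
  exact not_isUnit_zero hrows

theorem isProductVector_iff_detForm_eq_zero {x : Fin 2 × Fin 2 → K} :
    IsProductVector x ↔ detForm x = 0 := by
  constructor
  · rintro ⟨u, v, hx⟩
    simp only [detForm_apply, hx]
    ring
  · intro hdet
    by_cases h0 : (fun j => x (0, j)) = 0
    · refine ⟨![0, 1], fun j => x (1, j), ?_⟩
      rintro ⟨i, j⟩
      fin_cases i
      · simpa using congrFun h0 j
      · simp
    · obtain ⟨c, hc⟩ := exists_smul_eq_of_det_eq_zero h0 (b := fun j => x (1, j))
        (by simpa [det_fin_two] using hdet)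
      refine ⟨![1, c], fun j => x (0, j), ?_⟩
      rintro ⟨i, j⟩
      fin_cases i
      · simp
      · simpa using (congrFun hc j).symm

theorem span_le_range_tensorLeft_or_tensorRight {u u' v v' : Fin 2 → K} (hu : u ≠ 0)
    (hv : v ≠ 0) (hdet : detForm (tensorLeft u v + tensorLeft u' v') = 0) :
    span K {tensorLeft u v, tensorLeft u' v'} ≤ LinearMap.range (tensorLeft u) ∨
      span K {tensorLeft u v, tensorLeft u' v'} ≤ LinearMap.range (tensorRight v) := by
  rw [detForm_tensorLeft_add_tensorLeft, mul_eq_zero] at hdet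
  rcases hdet with hdet | hdet
  · obtain ⟨c, rfl⟩ := exists_smul_eq_of_det_eq_zero hu hdet
    refine .inl (span_le.2 (Set.insert_subset_iff.2 ⟨⟨v, rfl⟩, ?_⟩))
    refine Set.singleton_subset_iff.2 ⟨c • v', ?_⟩
    ext p
    simp [mul_left_comm, mul_assoc]
  · obtain ⟨c, rfl⟩ := exists_smul_eq_of_det_eq_zero hv hdet
    refine .inr (span_le.2 (Set.insert_subset_iff.2 ⟨⟨u, rfl⟩, ?_⟩))
    refine Set.singleton_subset_iff.2 ⟨c • u', ?_⟩
    ext p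
    simp [mul_left_comm, mul_assoc]

end Determinant

section Hermitian

variable {K : Type*} [Field K] [StarRing K] {ι κ : Type*}

theorem exists_kronecker_eq_of_col_mem_range_tensorLeft {h : Matrix (ι × κ) (ι × κ) K}
    (hh : h.IsHermitian) {u : ι → K} (hu : u ≠ 0)
    (hcol : ∀ q, h.col q ∈ LinearMap.range (tensorLeft u)) :
    ∃ (A : Matrix ι ι K) (B : Matrix κ κ K), h = A ⊗ₖ B := by
  obtain ⟨i₀, hi₀⟩ : ∃ i, u i ≠ 0 := Function.ne_iff.1 hu
  choose g hg using hcol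
  have hentry : ∀ p q, h p q = u p.1 * g q p.2 := fun p q => (congrFun (hg q) p).symm
  -- the columns factor through `u`, hence by hermiticity the rows through `star u`
  refine ⟨of fun i k => u i * star (u k),
    of fun j l => h (i₀, j) (i₀, l) / (u i₀ * star (u i₀)), ?_⟩
  ext ⟨i, j⟩ ⟨k, l⟩
  have e₁ := hh.apply (i₀, j) (k, l)
  have e₂ := hh.apply (i₀, j) (i₀, l)
  simp only [hentry, star_mul'] at e₁ e₂
  have hnorm : u i₀ * star (u i₀) ≠ 0 := mul_ne_zero hi₀ (star_ne_zero.2 hi₀)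
  simp only [kroneckerMap_apply, of_apply, hentry]
  rw [← mul_div_assoc, eq_div_iff hnorm]
  linear_combination (u i * star (u k)) * e₂ - (u i * star (u i₀)) * e₁

theorem exists_kronecker_eq_of_col_mem_range_tensorRight {h : Matrix (ι × κ) (ι × κ) K}
    (hh : h.IsHermitian) {v : κ → K} (hv : v ≠ 0)
    (hcol : ∀ q, h.col q ∈ LinearMap.range (tensorRight v)) :
    ∃ (A : Matrix ι ι K) (B : Matrix κ κ K), h = A ⊗ₖ B := by
  obtain ⟨B, A, hBA⟩ := exists_kronecker_eq_of_col_mem_range_tensorLeft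
    (hh.submatrix Prod.swap) hv fun q => by
      obtain ⟨g, hg⟩ := hcol q.swap
      exact ⟨g, by ext p; simpa [mul_comm] using congrFun hg p.swap⟩
  refine ⟨A, B, ?_⟩
  ext ⟨i, j⟩ ⟨k, l⟩
  simpa [mul_comm] using congrFun (congrFun hBA (j, i)) (l, k)

theorem exists_kronecker_eq_of_forall_detForm_eq_zero
    {h : Matrix (Fin 2 × Fin 2) (Fin 2 × Fin 2) K} (hh : h.IsHermitian) (hrank : h.rank = 2)
    (hdet : ∀ z ∈ LinearMap.range h.mulVecLin, detForm z = 0) :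
    ∃ (A B : Matrix (Fin 2) (Fin 2) K), h = A ⊗ₖ B := by
  obtain ⟨x, y, hxy, hspan⟩ := exists_linearIndependent_pair_span_eq hrank
  have hcol : ∀ q, h.col q ∈ span K {x, y} := fun q => by
    rw [hspan, range_mulVecLin]
    exact subset_span ⟨q, rfl⟩
  have hxN : x ∈ LinearMap.range h.mulVecLin := hspan ▸ subset_span (Set.mem_insert x {y})
  have hyN : y ∈ LinearMap.range h.mulVecLin := hspan ▸ subset_span (Set.mem_insert_of_mem x rfl)
  have hsum := hdet _ (add_mem hxN hyN)
  obtain ⟨u, v, hx⟩ := isProductVector_iff_detForm_eq_zero.2 (hdet x hxN)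
  obtain ⟨u', v', hy⟩ := isProductVector_iff_detForm_eq_zero.2 (hdet y hyN)
  obtain rfl : x = tensorLeft u v := funext hx
  obtain rfl : y = tensorLeft u' v' := funext hy
  have hx0 : tensorLeft u v ≠ 0 := by simpa using hxy.ne_zero 0
  have hu : u ≠ 0 := by rintro rfl; exact hx0 (by ext; simp)
  have hv : v ≠ 0 := by rintro rfl; exact hx0 (by ext; simp)
  rcases span_le_range_tensorLeft_or_tensorRight hu hv hsum with hle | hle
  · exact exists_kronecker_eq_of_col_mem_range_tensorLeft hh hu fun q => hle (hcol q)
  · exact exists_kronecker_eq_of_col_mem_range_tensorRight hh hv fun q => hle (hcol q)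

end Hermitian

/-- a rank-2 PSD operator on ℂ² ⊗ ℂ² that is not a tensor product of
single-qubit operators has two linearly independent entangled vectors in its range. -/
theorem range_contains_two_entangled_vectors
    (h : Matrix (Fin 2 × Fin 2) (Fin 2 × Fin 2) ℂ)
    (hpsd : h.PosSemidef) (hrank : h.rank = 2)
    (hnotprod : ¬ ∃ hA hB : Matrix (Fin 2) (Fin 2) ℂ, h = hA ⊗ₖ hB) :
    ∃ ψ φ : Fin 2 × Fin 2 → ℂ,
      (∃ w, ψ = h.mulVec w) ∧ (∃ w, φ = h.mulVec w) ∧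
      LinearIndependent ℂ ![ψ, φ] ∧
      (¬ ∃ u v : Fin 2 → ℂ, ∀ p : Fin 2 × Fin 2, ψ p = u p.1 * v p.2) ∧
      (¬ ∃ u v : Fin 2 → ℂ, ∀ p : Fin 2 × Fin 2, φ p = u p.1 * v p.2) := by
  obtain ⟨x, hxN, hx⟩ : ∃ x ∈ LinearMap.range h.mulVecLin, detForm x ≠ 0 := by
    by_contra! hdet
    exact hnotprod (exists_kronecker_eq_of_forall_detForm_eq_zero hpsd.isHermitian hrank hdet)
  obtain ⟨y, hyN, hxy, hy⟩ := detForm.exists_linearIndependent_pair_mem_map_ne_zero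
    (show 1 < h.rank by omega) hxN hx
  obtain ⟨wx, rfl⟩ := hxN
  obtain ⟨wy, rfl⟩ := hyN
  exact ⟨_, _, ⟨wx, rfl⟩, ⟨wy, rfl⟩, hxy, mt isProductVector_iff_detForm_eq_zero.1 hx,
    mt isProductVector_iff_detForm_eq_zero.1 hy⟩
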